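/- Let x* ∈ ℝⁿ be feasible for the NLP (cᵢ(x*) = 0 for i ≤ m̄ and cᵢ(x*) ≤ 0 for i > m̄) with ∇cᵢ(x*) ≠ 0 for all i ∈ {1,…,m}. Form the feasibility-subproblem dual data at x*: aⁱ := ∇cᵢ(x*), bᵢ := cᵢ(x*), āⁱ := aⁱ/‖aⁱ‖₂, with H₀ symmetric positive definite and X compact convex with 0 in its interior. Suppose u* = (u⁰,u¹,…,uᵐ,u^{m+1}) is dual-feasible with u^{m+1} = 0, uⁱ = ζᵢāⁱ for each i with ζᵢ ∈ [−1,1] for i ≤ m̄ and ζᵢ ∈ [0,1] for i > m̄, D(u*,0) = 0, and u* ≠ 0. Then u⁰ = 0, ζᵢ = 0 for every i > m̄ with cᵢ(x*) < 0, Σ_{i ∈ E ∪ A(x*)} ζᵢ∇cᵢ(x*) = 0 with ζᵢ ≥ 0 for i ∈ A(x*), and not all of the ζᵢ with i ∈ E ∪ A(x*) are zero; consequently the Mangasarian–Fromovitz constraint qualification fails at x*. -/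

import Mathlib

open scoped RealInnerProductSpace
open Finset

noncomputable section

/-- `ℝⁿ` with the Euclidean norm. -/
abbrev Evec (n : ℕ) : Type := EuclideanSpace ℝ (Fin n)

variable {n m : ℕ}

/-- Apply a matrix to a Euclidean vector. -/
def matApply (M : Matrix (Fin n) (Fin n) ℝ) (x : Evec n) : Evec n := Matrix.toEuclideanLin M x

/-- `āⁱ := aⁱ/‖aⁱ‖`. -/
def abar (a : Fin m → Evec n) (i : Fin m) : Evec n := ‖a i‖⁻¹ • a i

/-- `b̄ᵢ := bᵢ/‖aⁱ‖`. -/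
def bbar (a : Fin m → Evec n) (b : Fin m → ℝ) (i : Fin m) : ℝ := b i / ‖a i‖

/-- `Cᵢ`: hyperplane for equality constraints (`i.val < mbar`), half-space otherwise. -/
def Cset (mbar : ℕ) (a : Fin m → Evec n) (b : Fin m → ℝ) (i : Fin m) : Set (Evec n) :=
  if (i : ℕ) < mbar then {d | ⟪abar a i, d⟫ + bbar a b i = 0}
  else {d | ⟪abar a i, d⟫ + bbar a b i ≤ 0}

/-- Support function `δ*(y|C) = sup_{z∈C} ⟨y,z⟫` (via `sSup`). -/
def suppFn (y : Evec n) (C : Set (Evec n)) : ℝ := sSup ((fun z => ⟪y, z⟫) '' C)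

/-- Dual feasibility: `u⁰ + Σᵢ ‖aⁱ‖ uⁱ + u^{m+1} = 0` and `‖uⁱ‖ ≤ 1` for `i = 1,…,m`. -/
def DualFeasible (a : Fin m → Evec n) (u0 : Evec n) (u : Fin m → Evec n) (um1 : Evec n) : Prop :=
  (u0 + ∑ i, ‖a i‖ • u i + um1 = 0) ∧ ∀ i, ‖u i‖ ≤ 1

/-!
At `x*` the constraint sets `Cᵢ` are a hyperplane or half-space with unit normal `āⁱ`, so for
`uⁱ = ζᵢ āⁱ` (with `ζᵢ ≥ 0` on inequalities) the support function is attained at the point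
`-b̄ᵢ āⁱ` and `‖aⁱ‖ δ*(uⁱ|Cᵢ) = -ζᵢ cᵢ(x*)`, while `δ*(0|X) = 0`. Hence
`D(u*,0) = -½⟨u⁰, H₀⁻¹u⁰⟩ + Σ ζᵢ cᵢ(x*)` is a sum of nonpositive terms; if it vanishes then
`u⁰ = 0` by positive definiteness and complementary slackness `ζᵢ cᵢ(x*) = 0` holds. Dual
feasibility then reads `Σ ζᵢ ∇cᵢ(x*) = 0`, and `u* ≠ 0` makes these multipliers nontrivial,
which contradicts the dual form of MFCQ.
-/

lemma inner_matApply_pos {M : Matrix (Fin n) (Fin n) ℝ} (hM : M.PosDef)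
    {x : Evec n} (hx : x ≠ 0) : 0 < ⟪x, matApply M x⟫ := by
  have h := hM.dotProduct_mulVec_pos (x := WithLp.equiv 2 _ x) (by simpa using hx)
  simpa [matApply, Matrix.toLpLin_apply, EuclideanSpace.inner_eq_star_dotProduct,
    dotProduct_comm] using h

lemma inner_matApply_nonneg {M : Matrix (Fin n) (Fin n) ℝ} (hM : M.PosDef) (x : Evec n) :
    0 ≤ ⟪x, matApply M x⟫ := by
  rcases eq_or_ne x 0 with rfl | hx
  · simp [matApply]
  · exact (inner_matApply_pos hM hx).le

lemma suppFn_zero (C : Set (Evec n)) : suppFn 0 C = 0 := by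
  have hzero : ∀ r ∈ (fun z => ⟪(0 : Evec n), z⟫) '' C, r = 0 := by
    rintro r ⟨z, -, rfl⟩
    exact inner_zero_left z
  exact le_antisymm (Real.sSup_le (fun r hr => (hzero r hr).le) le_rfl)
    (Real.sSup_nonneg fun r hr => (hzero r hr).ge)

lemma suppFn_eq_inner_of_mem {y z₀ : Evec n} {C : Set (Evec n)} (hz₀ : z₀ ∈ C)
    (hmax : ∀ z ∈ C, ⟪y, z⟫ ≤ ⟪y, z₀⟫) : suppFn y C = ⟪y, z₀⟫ :=
  IsGreatest.csSup_eq ⟨⟨z₀, hz₀, rfl⟩, by rintro r ⟨z, hz, rfl⟩; exact hmax z hz⟩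

section Cset

variable {a : Fin m → Evec n} {i : Fin m}

lemma inner_abar_self (ha : a i ≠ 0) : ⟪abar a i, abar a i⟫ = 1 := by
  have hna : ‖a i‖ ≠ 0 := norm_ne_zero_iff.mpr ha
  rw [abar, real_inner_smul_left, real_inner_smul_right, real_inner_self_eq_norm_sq]
  field_simp

lemma norm_smul_smul_abar (ha : a i ≠ 0) (ζ : ℝ) : ‖a i‖ • ζ • abar a i = ζ • a i := by
  rw [abar, smul_smul, smul_smul, mul_right_comm, mul_inv_cancel₀ (norm_ne_zero_iff.mpr ha),
    one_mul]

lemma suppFn_smul_abar_Cset (mbar : ℕ) (b : Fin m → ℝ) (ha : a i ≠ 0) {ζ : ℝ}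
    (hζ : mbar ≤ (i : ℕ) → 0 ≤ ζ) :
    suppFn (ζ • abar a i) (Cset mbar a b i) = -(ζ * bbar a b i) := by
  have hfoot : ⟪abar a i, (-bbar a b i) • abar a i⟫ = -bbar a b i := by
    rw [real_inner_smul_right, inner_abar_self ha, mul_one]
  have hmem : (-bbar a b i) • abar a i ∈ Cset mbar a b i := by
    unfold Cset
    split_ifs <;> simp only [Set.mem_ofPred_eq, hfoot, neg_add_cancel, le_refl]
  have hmax : ∀ d ∈ Cset mbar a b i,
      ⟪ζ • abar a i, d⟫ ≤ ⟪ζ • abar a i, (-bbar a b i) • abar a i⟫ := by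
    intro d hd
    rw [real_inner_smul_left, real_inner_smul_left, hfoot]
    unfold Cset at hd
    split_ifs at hd with hE
    · have hd' : ⟪abar a i, d⟫ + bbar a b i = 0 := hd
      rw [show ⟪abar a i, d⟫ = -bbar a b i by linarith]
    · have hd' : ⟪abar a i, d⟫ + bbar a b i ≤ 0 := hd
      exact mul_le_mul_of_nonneg_left (by linarith) (hζ (not_lt.mp hE))
  rw [suppFn_eq_inner_of_mem hmem hmax, real_inner_smul_left, hfoot, mul_neg]

lemma norm_mul_suppFn_Cset (mbar : ℕ) (b : Fin m → ℝ) (ha : a i ≠ 0) {ζ : ℝ}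
    (hζ : mbar ≤ (i : ℕ) → 0 ≤ ζ) :
    ‖a i‖ * suppFn (ζ • abar a i) (Cset mbar a b i) = -(ζ * b i) := by
  rw [suppFn_smul_abar_Cset mbar b ha hζ, bbar]
  field_simp [norm_ne_zero_iff.mpr ha]

end Cset

/-- The dual value `D(u, 0)` of the feasibility subproblem, with `u = (u⁰, u¹, …, uᵐ, u^{m+1})`. -/
def feasibilityDualValue (mbar : ℕ) (a : Fin m → Evec n) (b : Fin m → ℝ)
    (H0 : Matrix (Fin n) (Fin n) ℝ) (X : Set (Evec n)) (u0 : Evec n) (u : Fin m → Evec n)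
    (um1 : Evec n) : ℝ :=
  -(1/2) * ⟪u0, matApply H0⁻¹ u0⟫ - (∑ i, ‖a i‖ * suppFn (u i) (Cset mbar a b i))
    - suppFn um1 X

section DualValue

variable {mbar : ℕ} {a : Fin m → Evec n} {b : Fin m → ℝ} {H0 : Matrix (Fin n) (Fin n) ℝ}
  {X : Set (Evec n)} {u0 : Evec n} {ζ : Fin m → ℝ}

lemma feasibilityDualValue_smul_abar (ha : ∀ i, a i ≠ 0)
    (hζ : ∀ i : Fin m, mbar ≤ (i : ℕ) → 0 ≤ ζ i) :
    feasibilityDualValue mbar a b H0 X u0 (fun i => ζ i • abar a i) 0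
      = -(1/2) * ⟪u0, matApply H0⁻¹ u0⟫ + ∑ i, ζ i * b i := by
  simp only [feasibilityDualValue, norm_mul_suppFn_Cset mbar b (ha _) (hζ _), suppFn_zero,
    sum_neg_distrib]
  ring

lemma eq_zero_and_mul_eq_zero_of_feasibilityDualValue_eq_zero (ha : ∀ i, a i ≠ 0)
    (hbE : ∀ i : Fin m, (i : ℕ) < mbar → b i = 0) (hbI : ∀ i : Fin m, mbar ≤ (i : ℕ) → b i ≤ 0)
    (hH0 : H0.PosDef) (hζ : ∀ i : Fin m, mbar ≤ (i : ℕ) → 0 ≤ ζ i)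
    (hD : feasibilityDualValue mbar a b H0 X u0 (fun i => ζ i • abar a i) 0 = 0) :
    u0 = 0 ∧ ∀ i, ζ i * b i = 0 := by
  rw [feasibilityDualValue_smul_abar ha hζ] at hD
  have hslack : ∀ i ∈ univ, ζ i * b i ≤ 0 := fun i _ => by
    rcases lt_or_ge (i : ℕ) mbar with hi | hi
    · simp [hbE i hi]
    · exact mul_nonpos_of_nonneg_of_nonpos (hζ i hi) (hbI i hi)
  have hq := inner_matApply_nonneg hH0.inv u0
  have hsum := sum_nonpos hslack
  refine ⟨?_, fun i => (sum_eq_zero_iff_of_nonpos hslack).mp (by linarith) i (mem_univ i)⟩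
  by_contra hu0
  linarith [inner_matApply_pos hH0.inv hu0]

lemma sum_smul_eq_zero_of_dualFeasible (ha : ∀ i, a i ≠ 0)
    (hu : DualFeasible a 0 (fun i => ζ i • abar a i) 0) : ∑ i, ζ i • a i = 0 := by
  simpa only [zero_add, add_zero, norm_smul_smul_abar (ha _)] using hu.1

end DualValue

theorem statement_19_general
    (n m mbar : ℕ) (c : Fin m → Evec n → ℝ)
    (xstar : Evec n)
    (hfeasE : ∀ i : Fin m, (i : ℕ) < mbar → c i xstar = 0)
    (hfeasI : ∀ i : Fin m, mbar ≤ (i : ℕ) → c i xstar ≤ 0)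
    (hgrad : ∀ i, gradient (c i) xstar ≠ 0)
    (H0 : Matrix (Fin n) (Fin n) ℝ) (hH0 : H0.PosDef)
    (X : Set (Evec n))
    (u0 : Evec n) (u : Fin m → Evec n)
    (hu : DualFeasible (fun i => gradient (c i) xstar) u0 u 0)
    (ζ : Fin m → ℝ)
    (hufrom : ∀ i, u i = ζ i • abar (fun j => gradient (c j) xstar) i)
    (hζI : ∀ i : Fin m, mbar ≤ (i : ℕ) → ζ i ∈ Set.Icc (0 : ℝ) 1)
    (hD0 : -(1/2) * ⟪u0, matApply H0⁻¹ u0⟫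
        - (∑ i, ‖gradient (c i) xstar‖ *
            suppFn (u i) (Cset mbar (fun j => gradient (c j) xstar) (fun j => c j xstar) i))
        - suppFn (0 : Evec n) X = 0)
    (hune : ¬(u0 = 0 ∧ ∀ i, u i = 0)) :
    u0 = 0 ∧
    (∀ i : Fin m, mbar ≤ (i : ℕ) → c i xstar < 0 → ζ i = 0) ∧
    (∑ i : Fin m, (if (i : ℕ) < mbar ∨ c i xstar = 0 then ζ i else 0) • gradient (c i) xstar = 0) ∧
    (∀ i : Fin m, mbar ≤ (i : ℕ) → c i xstar = 0 → 0 ≤ ζ i) ∧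
    ¬(∀ i : Fin m, ((i : ℕ) < mbar ∨ c i xstar = 0) → ζ i = 0) ∧
    ¬(∀ lam : Fin m → ℝ,
        (∀ i : Fin m, ¬((i : ℕ) < mbar ∨ c i xstar = 0) → lam i = 0) →
        (∑ i, lam i • gradient (c i) xstar = 0) →
        (∀ i : Fin m, mbar ≤ (i : ℕ) → c i xstar = 0 → 0 ≤ lam i) →
        ∀ i, lam i = 0) := by
  obtain rfl : u = _ := funext hufrom
  obtain ⟨rfl, hζc⟩ := eq_zero_and_mul_eq_zero_of_feasibilityDualValue_eq_zero hgrad hfeasE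
    hfeasI hH0 (fun i hi => (hζI i hi).1) hD0
  have hinactive : ∀ i : Fin m, mbar ≤ (i : ℕ) → c i xstar < 0 → ζ i = 0 :=
    fun i _ hlt => (mul_eq_zero.mp (hζc i)).resolve_right hlt.ne
  have hrestrict : ∀ i : Fin m, (if (i : ℕ) < mbar ∨ c i xstar = 0 then ζ i else 0) = ζ i := by
    intro i
    split_ifs with hA
    · rfl
    · push Not at hA
      exact (hinactive i hA.1 (lt_of_le_of_ne (hfeasI i hA.1) hA.2)).symm
  have hsum : ∑ i : Fin m,
      (if (i : ℕ) < mbar ∨ c i xstar = 0 then ζ i else 0) • gradient (c i) xstar = 0 := by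
    simpa only [hrestrict] using sum_smul_eq_zero_of_dualFeasible hgrad hu
  have hnontrivial : ¬∀ i : Fin m, ((i : ℕ) < mbar ∨ c i xstar = 0) → ζ i = 0 := by
    refine fun hzero => hune ⟨rfl, fun i => ?_⟩
    have hζi : ζ i = 0 := by
      rw [← hrestrict i]
      split_ifs with hA
      exacts [hzero i hA, rfl]
    simp [hζi]
  refine ⟨rfl, hinactive, hsum, fun i hi _ => (hζI i hi).1, hnontrivial, fun hmfcq => ?_⟩
  refine hnontrivial fun i hA => ?_
  have h := hmfcq _ (fun j hj => if_neg hj) hsum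
    (fun j hj hcj => by simpa only [hrestrict] using (hζI j hj).1) i
  rwa [if_pos hA] at h

/-- Let `x*` be feasible with `∇cᵢ(x*) ≠ 0` for all `i`.  Form the
feasibility-subproblem dual data at `x*` (`aⁱ := ∇cᵢ(x*)`, `bᵢ := cᵢ(x*)`, `H₀` symmetric
positive definite, `X` compact convex with `0` in its interior).  Suppose `u*` is
dual-feasible with `u^{m+1} = 0`, `uⁱ = ζᵢāⁱ` (`ζᵢ ∈ [−1,1]` for equalities, `ζᵢ ∈ [0,1]`
for inequalities), `D(u*,0) = 0`, and `u* ≠ 0`.  Then `u⁰ = 0`, `ζᵢ = 0` for every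
strictly inactive inequality, `Σ_{i∈E∪A(x*)} ζᵢ∇cᵢ(x*) = 0` with `ζᵢ ≥ 0` on `A(x*)`,
not all these `ζᵢ` vanish, and consequently the (dual form of the) MFCQ fails at `x*`. -/
theorem statement_19
    (n m mbar : ℕ) (hn : 1 ≤ n) (hmm : mbar ≤ m)
    (f : Evec n → ℝ) (c : Fin m → Evec n → ℝ)
    (hf : ContDiff ℝ 1 f) (hc : ∀ i, ContDiff ℝ 1 (c i))
    (xstar : Evec n)
    (hfeasE : ∀ i : Fin m, (i : ℕ) < mbar → c i xstar = 0)
    (hfeasI : ∀ i : Fin m, mbar ≤ (i : ℕ) → c i xstar ≤ 0)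
    (hgrad : ∀ i, gradient (c i) xstar ≠ 0)
    (H0 : Matrix (Fin n) (Fin n) ℝ) (hH0 : H0.PosDef)
    (X : Set (Evec n)) (hXne : X.Nonempty) (hXcp : IsCompact X) (hXcv : Convex ℝ X)
    (hX0 : (0 : Evec n) ∈ interior X)
    (u0 : Evec n) (u : Fin m → Evec n)
    (hu : DualFeasible (fun i => gradient (c i) xstar) u0 u 0)
    (ζ : Fin m → ℝ)
    (hufrom : ∀ i, u i = ζ i • abar (fun j => gradient (c j) xstar) i)
    (hζE : ∀ i : Fin m, (i : ℕ) < mbar → ζ i ∈ Set.Icc (-1 : ℝ) 1)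
    (hζI : ∀ i : Fin m, mbar ≤ (i : ℕ) → ζ i ∈ Set.Icc (0 : ℝ) 1)
    (hD0 : -(1/2) * ⟪u0, matApply H0⁻¹ u0⟫
        - (∑ i, ‖gradient (c i) xstar‖ *
            suppFn (u i) (Cset mbar (fun j => gradient (c j) xstar) (fun j => c j xstar) i))
        - suppFn (0 : Evec n) X = 0)
    (hune : ¬(u0 = 0 ∧ ∀ i, u i = 0)) :
    u0 = 0 ∧
    (∀ i : Fin m, mbar ≤ (i : ℕ) → c i xstar < 0 → ζ i = 0) ∧
    (∑ i : Fin m, (if (i : ℕ) < mbar ∨ c i xstar = 0 then ζ i else 0) • gradient (c i) xstar = 0) ∧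
    (∀ i : Fin m, mbar ≤ (i : ℕ) → c i xstar = 0 → 0 ≤ ζ i) ∧
    ¬(∀ i : Fin m, ((i : ℕ) < mbar ∨ c i xstar = 0) → ζ i = 0) ∧
    ¬(∀ lam : Fin m → ℝ,
        (∀ i : Fin m, ¬((i : ℕ) < mbar ∨ c i xstar = 0) → lam i = 0) →
        (∑ i, lam i • gradient (c i) xstar = 0) →
        (∀ i : Fin m, mbar ≤ (i : ℕ) → c i xstar = 0 → 0 ≤ lam i) →
        ∀ i, lam i = 0) :=
  statement_19_general n m mbar c xstar hfeasE hfeasI hgrad H0 hH0 X u0 u hu ζ hufrom hζI hD0 hune
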